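/- For all m, n ≥ 1: tr C_{m,n} = Σ_{j=0}^{2n} (−1)ʲ tr( A_{m+j} B_{2n−j} ), all the operators involved having absolutely summable diagonals in the standard basis of ℓ²(VX). -/

import Mathlib

/- Formalization of a statement from "Ihara Zeta functions of infinite weighted graphs"
   (A. Deitmar).  Context: `X` is a connected graph of bounded valency, `w` is a positive
   weight function on oriented edges (darts) with finite total weight. -/

open scoped BigOperators
open SimpleGraph

attribute [local instance 10] Classical.propDecidable
noncomputable local instance (priority := 10) {α : Type*} : DecidableEq α := Classical.decEq _

variable {V : Type*}

/-- The standard basis vector of `ℓ²(ι)` at `i`. -/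
noncomputable def bv {ι : Type*} (i : ι) : lp (fun _ : ι => ℂ) 2 := lp.single 2 i 1

/-- For adjacent vertices `x, y`, `dartW G w h = w(x,y)·w(y,x)`, the weight `W(x,y)` of the
underlying edge. -/
noncomputable def dartW (G : SimpleGraph V) (w : G.Dart → ℝ) {x y : V} (h : G.Adj x y) : ℝ :=
  w ⟨(x, y), h⟩ * w ⟨(y, x), h.symm⟩

/-- A path of length `m` in the graph `G`: a sequence of adjacent vertices
`x₀, x₁, …, x_m` (encoded as a function `ℕ → V` which is constant from index `m` on). -/
structure GPath (G : SimpleGraph V) (m : ℕ) where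
  f : ℕ → V
  adj : ∀ i, i < m → G.Adj (f i) (f (i + 1))
  stable : ∀ i, m ≤ i → f i = f m

/-- The weight `w(p)` of a path: the product of the weights of its oriented edges. -/
noncomputable def GPath.wgt {G : SimpleGraph V} {m : ℕ} (w : G.Dart → ℝ) (p : GPath G m) : ℝ :=
  ∏ i : Fin m, w ⟨(p.f i, p.f (i + 1)), p.adj i i.isLt⟩

/-- A path is reduced (has no backtracking) iff `x_{j-1} ≠ x_{j+1}` for all `j`. -/
def GPath.Reduced {G : SimpleGraph V} {m : ℕ} (p : GPath G m) : Prop :=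
  ∀ i, i + 2 ≤ m → p.f i ≠ p.f (i + 2)

/-- The diagonal of an operator on `ℓ²(ι)` with respect to the standard orthonormal basis
is absolutely summable. -/
def DiagAbsSummable {ι : Type*}
    (S : lp (fun _ : ι => ℂ) 2 →L[ℂ] lp (fun _ : ι => ℂ) 2) : Prop :=
  Summable fun i : ι => ‖S (bv i) i‖

/-- The trace of an operator on `ℓ²(ι)`: the sum of its diagonal matrix entries with
respect to the standard orthonormal basis. -/
noncomputable def diagTr {ι : Type*}
    (S : lp (fun _ : ι => ℂ) 2 →L[ℂ] lp (fun _ : ι => ℂ) 2) : ℂ :=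
  ∑' i : ι, S (bv i) i


/-! Prepending an edge `(x, x')` to a reduced path starting at `x'` gives either a reduced path
starting at `x`, or a path `x, x', x, …` that backtracks once and then continues along a reduced
path from `x` not returning to `x'`. Weighting by `W(x, x')ᵏ w(x, x')`, this expresses the odd
diagonal entries of `A_{m+j} B_{2n-j}` through the neighbouring even entries and the diagonal
sums of `C`, so that in the alternating sum consecutive pairs of terms telescope, leaving
`tr C_{m,n}`. Every diagonal entry involved is nonnegative and at most a constant times the total
weight of paths of fixed length starting at `x`; by bounded valency that weight is at most a
constant times the out-weight `Σ_{x' ∼ x} w(x, x')`, which is summable over `x` because `w` is. -/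

theorem Finset.sum_range_two_mul_eq_sub {M : Type*} [AddCommGroup M] (f F : ℕ → M) (n : ℕ)
    (h : ∀ l < n, f (2 * l) + f (2 * l + 1) = F l - F (l + 1)) :
    ∑ j ∈ Finset.range (2 * n), f j = F 0 - F n := by
  induction n with
  | zero => simp
  | succ n ih =>
    rw [show 2 * (n + 1) = 2 * n + 1 + 1 by ring, Finset.sum_range_succ, Finset.sum_range_succ,
      add_assoc, ih fun l hl => h l (by omega), h n n.lt_succ_self]
    abel

section Operators

variable {ι : Type*}

theorem apply_eq_tsum_mul (T : lp (fun _ : ι => ℂ) 2 →L[ℂ] lp (fun _ : ι => ℂ) 2)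
    (v : lp (fun _ : ι => ℂ) 2) (y : ι) : T v y = ∑' i, v i * T (bv i) y := by
  have h := ((lp.hasSum_single ENNReal.ofNat_ne_top v).mapL
    ((lp.evalCLM ℂ (fun _ : ι => ℂ) 2 y).comp T)).tsum_eq
  refine h.symm.trans (tsum_congr fun i => ?_)
  change T (lp.single 2 i (v i)) y = _
  have hsingle : lp.single 2 i (v i) = v i • bv i := by
    rw [bv, ← lp.single_smul, smul_eq_mul, mul_one]
  rw [hsingle, map_smul, lp.coeFn_smul, Pi.smul_apply, smul_eq_mul]

theorem apply_eq_tsum_subtype_mul (T : lp (fun _ : ι => ℂ) 2 →L[ℂ] lp (fun _ : ι => ℂ) 2)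
    {v : lp (fun _ : ι => ℂ) 2} {S : Set ι} (hv : ∀ i ∉ S, v i = 0) (y : ι) :
    T v y = ∑' i : S, v i * T (bv i) y := by
  rw [apply_eq_tsum_mul]
  refine (tsum_subtype_eq_of_support_subset fun i hi => ?_).symm
  by_contra hiS
  exact hi (mul_eq_zero_of_left (hv i hiS) _)

theorem apply_eq_mul_of_eq_single (T : lp (fun _ : ι => ℂ) 2 →L[ℂ] lp (fun _ : ι => ℂ) 2)
    {v : lp (fun _ : ι => ℂ) 2} {x : ι} (hv : ∀ i, i ≠ x → v i = 0) (y : ι) :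
    T v y = v x * T (bv x) y := by
  rw [apply_eq_tsum_mul, tsum_eq_single x fun i hi => mul_eq_zero_of_left (hv i hi) _]

theorem sum_mul_diagTr {κ : Type*} (s : Finset κ) (c : κ → ℂ)
    (S : κ → lp (fun _ : ι => ℂ) 2 →L[ℂ] lp (fun _ : ι => ℂ) 2)
    (hS : ∀ j ∈ s, DiagAbsSummable (S j)) :
    ∑ j ∈ s, c j * diagTr (S j) = ∑' i, ∑ j ∈ s, c j * S j (bv i) i := by
  simp_rw [diagTr, ← tsum_mul_left]
  exact (Summable.tsum_finsetSum fun j hj => ((hS j hj).of_norm).mul_left (c j)).symm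

end Operators

namespace GPath

variable {G : SimpleGraph V} {m : ℕ}

@[ext]
theorem ext {p q : GPath G m} (h : ∀ i, p.f i = q.f i) : p = q := by
  cases p; cases q; congr; exact funext h

def tail (p : GPath G (m + 1)) : GPath G m where
  f i := p.f (i + 1)
  adj i h := p.adj (i + 1) (by omega)
  stable i h := p.stable (i + 1) (by omega)

def cons (x : V) (p : GPath G m) (h : G.Adj x (p.f 0)) : GPath G (m + 1) where
  f i := Nat.casesOn i x p.f
  adj
    | 0, _ => h
    | i + 1, hi => p.adj i (by omega)
  stable
    | 0, hi => by omega
    | i + 1, hi => p.stable i (by omega)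

def secondVertex {x : V} (p : GPath G (m + 1)) (hp : p.f 0 = x) : G.neighborSet x :=
  ⟨p.f 1, by have := p.adj 0 m.succ_pos; rwa [hp] at this⟩

def firstDart (p : GPath G (m + 1)) : G.Dart := ⟨(p.f 0, p.f 1), p.adj 0 m.succ_pos⟩

theorem Reduced.of_tail {p : GPath G (m + 1)} (hp : p.tail.Reduced) (h : p.f 0 ≠ p.f 2) :
    p.Reduced
  | 0, _ => h
  | i + 1, hi => hp i (by omega)

theorem wgt_cons (w : G.Dart → ℝ) (x : V) (p : GPath G m) (h) :
    (cons x p h).wgt w = w ⟨(x, p.f 0), h⟩ * p.wgt w :=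
  Fin.prod_univ_succ _

theorem wgt_cons_cons (w : G.Dart → ℝ) {x' : V} (p : GPath G m) (h : G.Adj x' (p.f 0))
    (h' : G.Adj (p.f 0) x') :
    (cons (p.f 0) (cons x' p h) h').wgt w = dartW G w h' * p.wgt w := by
  rw [wgt_cons w (p.f 0) (cons x' p h) h', wgt_cons, ← mul_assoc]
  rfl

theorem wgt_nonneg {w : G.Dart → ℝ} (hw : ∀ e, 0 ≤ w e) (p : GPath G m) : 0 ≤ p.wgt w :=
  Finset.prod_nonneg fun _ _ => hw _

def consEquiv (x : V) :
    {p : GPath G (m + 1) // p.f 0 = x} ≃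
      Σ x' : G.neighborSet x, {p : GPath G m // p.f 0 = x'} where
  toFun p := ⟨p.1.secondVertex p.2, p.1.tail, rfl⟩
  invFun q := ⟨cons x q.2.1 (by rw [q.2.2]; exact q.1.2), rfl⟩
  left_inv := by
    rintro ⟨p, rfl⟩
    ext (_ | i) <;> rfl
  right_inv := by
    rintro ⟨⟨x', hx'⟩, p, hp⟩
    change p.f 0 = x' at hp
    subst hp
    rfl

instance subsingleton_startingAt_zero (x : V) : Subsingleton {p : GPath G 0 // p.f 0 = x} :=
  ⟨fun p q => Subtype.ext <| ext fun i => by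
    rw [p.1.stable i i.zero_le, q.1.stable i i.zero_le, p.2, q.2]⟩

variable [∀ x, Finite (G.neighborSet x)]

instance finite_startingAt : ∀ (m : ℕ) (x : V), Finite {p : GPath G m // p.f 0 = x}
  | 0, _ => Finite.of_subsingleton
  | m + 1, x => have := finite_startingAt m; .of_equiv _ (consEquiv x).symm

end GPath

abbrev RedPath (G : SimpleGraph V) (m : ℕ) (x y : V) : Type _ :=
  {p : GPath G m // p.Reduced ∧ p.f 0 = x ∧ p.f m = y}

instance RedPath.finite {G : SimpleGraph V} [∀ x, Finite (G.neighborSet x)] (m : ℕ) (x y : V) :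
    Finite (RedPath G m x y) :=
  .of_injective (fun p => (⟨p.1, p.2.2.1⟩ : {p : GPath G m // p.f 0 = x}))
    fun _ _ h => Subtype.ext (Subtype.ext_iff.mp h :)

noncomputable section Weights

variable {G : SimpleGraph V} (w : G.Dart → ℝ)

/-- The paper's `W`, as a function of oriented edges. -/
def edgeW (d : G.Dart) : ℝ := dartW G w d.adj

def pathWeight (m : ℕ) (x : V) : ℝ := ∑' p : {p : GPath G m // p.f 0 = x}, p.1.wgt w

/-- The matrix entry `⟨A_m x, y⟩`. -/
def redWeight (m : ℕ) (x y : V) : ℝ := ∑' p : RedPath G m x y, p.1.wgt w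

/-- Sums over paths of length `m + 1`: for `g = W ^ n` this is the entry `⟨C_{m+1,n} x, y⟩`. -/
def redWeightBy (g : G.Dart → ℝ) (m : ℕ) (x y : V) : ℝ :=
  ∑' p : RedPath G (m + 1) x y, g p.1.firstDart * p.1.wgt w

def outSum (g : G.Dart → ℝ) (x : V) : ℝ :=
  ∑' x' : G.neighborSet x, g (G.dartOfNeighborSet x x')

end Weights

section Backtracking

/-- Prepending an edge to a reduced path of length `s + 2` produces exactly these paths. -/
abbrev TailRedPath (G : SimpleGraph V) (x y : V) (s : ℕ) : Type _ :=
  {r : GPath G (s + 3) // r.tail.Reduced ∧ r.f 0 = x ∧ r.f (s + 3) = y}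

variable {G : SimpleGraph V} (x y : V) (s : ℕ)

def prependEquiv :
    (Σ x' : G.neighborSet x, RedPath G (s + 2) x' y) ≃ TailRedPath G x y s where
  toFun a := ⟨.cons x a.2.1 (by rw [a.2.2.2.1]; exact a.1.2), a.2.2.1, rfl, a.2.2.2.2⟩
  invFun r := ⟨r.1.secondVertex r.2.2.1, r.1.tail, r.2.1, rfl, r.2.2.2⟩
  left_inv := by
    rintro ⟨⟨x', hx'⟩, q, hred, hq0, hql⟩
    change q.f 0 = x' at hq0
    subst hq0
    rfl
  right_inv := by
    rintro ⟨r, hred, rfl, hrl⟩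
    ext (_ | i) <;> rfl

def reducedPartEquiv :
    {r : TailRedPath G x y s | r.1.Reduced} ≃ RedPath G (s + 3) x y where
  toFun u := ⟨u.1.1, u.2, u.1.2.2⟩
  invFun p := ⟨⟨p.1, fun i _ => p.2.1 (i + 1) (by omega), p.2.2⟩, p.2.1⟩
  left_inv _ := rfl
  right_inv _ := rfl

def backtrackingPartEquiv :
    ↥({r : TailRedPath G x y s | r.1.Reduced}ᶜ) ≃
      Σ x' : G.neighborSet x,
        ↥({q : RedPath G (s + 1) x y | q.1.secondVertex q.2.2.1 = x'}ᶜ) where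
  toFun u := by
    obtain ⟨⟨r, hred, hr0, hrl⟩, hnot⟩ := u
    have hr2 : r.f 2 = x := by
      by_contra h
      exact hnot (GPath.Reduced.of_tail hred fun h' => h (h'.symm.trans hr0))
    exact ⟨r.secondVertex hr0, ⟨r.tail.tail, fun i _ => hred (i + 1) (by omega), hr2, hrl⟩,
      fun h => hred 0 (by omega) (congrArg Subtype.val h).symm⟩
  invFun b := by
    obtain ⟨x', ⟨q, hred, hq0, hql⟩, hne⟩ := b
    have hq : G.Adj x' (q.f 0) := hq0 ▸ x'.2.symm
    refine ⟨⟨.cons x (.cons x' q hq) x'.2, ?_, rfl, hql⟩, fun h => h 0 (by omega) hq0.symm⟩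
    exact GPath.Reduced.of_tail hred fun h => hne (Subtype.ext h.symm)
  left_inv := by
    rintro ⟨⟨r, hred, rfl, hrl⟩, hnot⟩
    ext (_ | _ | i) <;> rfl
  right_inv := by
    rintro ⟨⟨x', hx'⟩, ⟨q, hred, hq0, hql⟩, hne⟩
    rfl

end Backtracking

section KeyIdentity

variable {G : SimpleGraph V} (w g : G.Dart → ℝ) (x y : V) (s : ℕ)

theorem tsum_backtrackingPart :
    ∑' u : ↥({r : TailRedPath G x y s | r.1.Reduced}ᶜ), g u.1.1.firstDart * u.1.1.wgt w
      = ∑' b : Σ x' : G.neighborSet x,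
          ↥({q : RedPath G (s + 1) x y | q.1.secondVertex q.2.2.1 = x'}ᶜ),
          (g * edgeW w) (G.dartOfNeighborSet x b.1) * b.2.1.1.wgt w := by
  rw [← (backtrackingPartEquiv x y s).symm.tsum_eq]
  refine tsum_congr ?_
  rintro ⟨⟨x', hx'⟩, ⟨q, hred, hq0, hql⟩, hne⟩
  subst hq0
  exact (congrArg (g _ * ·) (GPath.wgt_cons_cons w q _ hx')).trans (mul_assoc _ _ _).symm

variable [∀ x, Finite (G.neighborSet x)]

instance : Finite (TailRedPath G x y s) := .of_equiv _ (prependEquiv x y s)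

theorem tsum_prepend :
    ∑' x' : G.neighborSet x, g (G.dartOfNeighborSet x x') * w (G.dartOfNeighborSet x x') *
        redWeight w (s + 2) x' y
      = ∑' r : TailRedPath G x y s, g r.1.firstDart * r.1.wgt w := by
  simp_rw [redWeight, ← tsum_mul_left]
  rw [← (prependEquiv x y s).tsum_eq, Summable.tsum_sigma .of_finite]
  refine tsum_congr fun ⟨x', hx'⟩ => tsum_congr fun ⟨q, hred, hq0, hql⟩ => ?_
  change q.f 0 = x' at hq0
  subst hq0
  rw [mul_assoc]
  exact congrArg _ (GPath.wgt_cons w x q hx').symm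

theorem tsum_secondVertex_fiber :
    ∑' x' : G.neighborSet x,
        ∑' q : ↥{q : RedPath G (s + 1) x y | q.1.secondVertex q.2.2.1 = x'},
          g (G.dartOfNeighborSet x x') * q.1.1.wgt w
      = redWeightBy w g s x y := by
  rw [redWeightBy,
    ← (Equiv.sigmaFiberEquiv fun q : RedPath G (s + 1) x y => q.1.secondVertex q.2.2.1).tsum_eq,
    Summable.tsum_sigma .of_finite]
  refine tsum_congr fun x' => tsum_congr ?_
  rintro ⟨⟨q, hred, hq0, hql⟩, rfl⟩
  subst hq0
  rfl

theorem tsum_prepend_add_redWeightBy :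
    ∑' x' : G.neighborSet x, g (G.dartOfNeighborSet x x') * w (G.dartOfNeighborSet x x') *
        redWeight w (s + 2) x' y + redWeightBy w (g * edgeW w) s x y
      = redWeightBy w g (s + 2) x y + outSum (g * edgeW w) x * redWeight w (s + 1) x y := by
  have hsplit := Summable.tsum_add_tsum_compl
    (s := {r : TailRedPath G x y s | r.1.Reduced})
    (f := fun r => g r.1.firstDart * r.1.wgt w) .of_finite .of_finite
  have hreduced : ∑' u : {r : TailRedPath G x y s | r.1.Reduced},
      g u.1.1.firstDart * u.1.1.wgt w = redWeightBy w g (s + 2) x y :=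
    (reducedPartEquiv x y s).tsum_eq (fun p => g p.1.firstDart * p.1.wgt w)
  have hout : outSum (g * edgeW w) x * redWeight w (s + 1) x y
      = ∑' x' : G.neighborSet x,
          (∑' q : ↥{q : RedPath G (s + 1) x y | q.1.secondVertex q.2.2.1 = x'},
            (g * edgeW w) (G.dartOfNeighborSet x x') * q.1.1.wgt w
          + ∑' q : ↥({q : RedPath G (s + 1) x y | q.1.secondVertex q.2.2.1 = x'}ᶜ),
            (g * edgeW w) (G.dartOfNeighborSet x x') * q.1.1.wgt w) := by
    rw [outSum, ← tsum_mul_right]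
    refine tsum_congr fun x' => ?_
    rw [redWeight, ← tsum_mul_left]
    exact (Summable.tsum_add_tsum_compl (f := fun q : RedPath G (s + 1) x y =>
      (g * edgeW w) (G.dartOfNeighborSet x x') * q.1.wgt w) .of_finite .of_finite).symm
  rw [tsum_prepend, ← hsplit, hreduced, tsum_backtrackingPart, Summable.tsum_sigma .of_finite,
    ← tsum_secondVertex_fiber w (g * edgeW w), hout, Summable.tsum_add .of_finite .of_finite]
  ring

theorem outSum_mul_redWeight_sub_tsum (k : ℕ) :
    outSum (edgeW w ^ (k + 1)) x * redWeight w (s + 1) x y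
        - ∑' x' : G.neighborSet x, (edgeW w ^ k) (G.dartOfNeighborSet x x') *
          w (G.dartOfNeighborSet x x') * redWeight w (s + 2) x' y
      = redWeightBy w (edgeW w ^ (k + 1)) s x y - redWeightBy w (edgeW w ^ k) (s + 2) x y := by
  have key := tsum_prepend_add_redWeightBy w (edgeW w ^ k) x y s
  rw [← pow_succ] at key
  linarith

end KeyIdentity

section Bounds

variable {G : SimpleGraph V} {w : G.Dart → ℝ}

theorem pathWeight_zero (x : V) : pathWeight w 0 x = 1 := by
  rw [pathWeight, tsum_eq_single ⟨⟨fun _ => x, fun _ h => absurd h (Nat.not_lt_zero _),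
    fun _ _ => rfl⟩, rfl⟩ fun p hp => absurd (Subsingleton.elim p _) hp]
  exact Finset.prod_empty

theorem pathWeight_nonneg (hw : ∀ e, 0 ≤ w e) (m : ℕ) (x : V) : 0 ≤ pathWeight w m x :=
  tsum_nonneg fun p => p.1.wgt_nonneg hw

def dartEquivSigma (G : SimpleGraph V) : (Σ x, G.neighborSet x) ≃ G.Dart where
  toFun q := G.dartOfNeighborSet q.1 q.2
  invFun d := ⟨d.fst, d.snd, d.adj⟩
  left_inv _ := rfl
  right_inv _ := rfl

theorem summable_outSum (hsum : Summable w) : Summable (outSum w) :=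
  ((dartEquivSigma G).summable_iff.mpr hsum).sigma

variable [∀ x, Finite (G.neighborSet x)]

theorem pathWeight_succ (m : ℕ) (x : V) :
    pathWeight w (m + 1) x
      = ∑' x' : G.neighborSet x, w (G.dartOfNeighborSet x x') * pathWeight w m x' := by
  simp_rw [pathWeight, ← tsum_mul_left]
  rw [← (GPath.consEquiv x).symm.tsum_eq, Summable.tsum_sigma .of_finite]
  refine tsum_congr fun ⟨x', hx'⟩ => tsum_congr fun ⟨q, hq0⟩ => ?_
  change q.f 0 = x' at hq0
  subst hq0
  exact GPath.wgt_cons w x q hx'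

theorem tsum_neighborSet_le {x : V} {M c : ℝ} (hdeg : ((G.neighborSet x).ncard : ℝ) ≤ M)
    {f : G.neighborSet x → ℝ} (hf : ∀ i, f i ≤ c) (hc : 0 ≤ c) : ∑' i, f i ≤ M * c := by
  have := Fintype.ofFinite (G.neighborSet x)
  rw [tsum_fintype]
  calc ∑ i, f i ≤ ∑ _i : G.neighborSet x, c := Finset.sum_le_sum fun i _ => hf i
    _ = (G.neighborSet x).ncard * c := by
      rw [Finset.sum_const, Finset.card_univ, nsmul_eq_mul, ← Nat.card_coe_set_eq,
        Nat.card_eq_fintype_card]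
    _ ≤ M * c := mul_le_mul_of_nonneg_right hdeg hc

variable (hw : ∀ e, 0 ≤ w e) {K M : ℝ} (hK : ∀ e, w e ≤ K) (hK0 : 0 ≤ K)
  (hdeg : ∀ x, ((G.neighborSet x).ncard : ℝ) ≤ M)
include hw

include hK hK0 hdeg in
theorem pathWeight_le : ∀ (m : ℕ) (x : V), pathWeight w m x ≤ (M * K) ^ m
  | 0, x => (pathWeight_zero x).le
  | m + 1, x => by
    have hMK : 0 ≤ M * K := mul_nonneg ((Nat.cast_nonneg _).trans (hdeg x)) hK0
    rw [pathWeight_succ, pow_succ', mul_assoc]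
    exact tsum_neighborSet_le (hdeg x)
      (fun x' => mul_le_mul (hK _) (pathWeight_le m x') (pathWeight_nonneg hw m x') hK0)
      (mul_nonneg hK0 (pow_nonneg hMK m))

include hK hK0 hdeg in
theorem pathWeight_succ_le (m : ℕ) (x : V) :
    pathWeight w (m + 1) x ≤ (M * K) ^ m * outSum w x := by
  rw [pathWeight_succ, outSum, ← tsum_mul_left]
  refine Summable.tsum_le_tsum (fun x' => ?_) .of_finite .of_finite
  rw [mul_comm]
  exact mul_le_mul_of_nonneg_right (pathWeight_le hw hK hK0 hdeg m x') (hw _)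

include hdeg in
theorem summable_pathWeight_succ (hsum : Summable w) (m : ℕ) :
    Summable (pathWeight w (m + 1)) :=
  Summable.of_nonneg_of_le (pathWeight_nonneg hw _)
    (pathWeight_succ_le hw (fun e => hsum.le_tsum e fun _ _ => hw _) (tsum_nonneg hw) hdeg m)
    ((summable_outSum hsum).mul_left _)

end Bounds

section Estimates

variable {G : SimpleGraph V} {w : G.Dart → ℝ}

theorem edgeW_pow_nonneg (hw : ∀ e, 0 ≤ w e) (k : ℕ) (d : G.Dart) : 0 ≤ (edgeW w ^ k) d :=
  pow_nonneg (mul_nonneg (hw _) (hw _)) k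

theorem edgeW_pow_le (hw : ∀ e, 0 ≤ w e) (hsum : Summable w) (k : ℕ) (d : G.Dart) :
    (edgeW w ^ k) d ≤ ((∑' e, w e) ^ 2) ^ k := by
  have hK (e : G.Dart) : w e ≤ ∑' e, w e := hsum.le_tsum e fun _ _ => hw _
  refine pow_le_pow_left₀ (mul_nonneg (hw _) (hw _)) ?_ k
  rw [sq]
  exact mul_le_mul (hK _) (hK _) (hw _) ((hw d).trans (hK d))

theorem redWeight_nonneg (hw : ∀ e, 0 ≤ w e) (m : ℕ) (x y : V) : 0 ≤ redWeight w m x y :=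
  tsum_nonneg fun p => p.1.wgt_nonneg hw

theorem redWeightBy_nonneg {g : G.Dart → ℝ} (hw : ∀ e, 0 ≤ w e) (hg : ∀ d, 0 ≤ g d) (m : ℕ)
    (x y : V) : 0 ≤ redWeightBy w g m x y :=
  tsum_nonneg fun p => mul_nonneg (hg _) (p.1.wgt_nonneg hw)

theorem outSum_nonneg {g : G.Dart → ℝ} (hg : ∀ d, 0 ≤ g d) (x : V) : 0 ≤ outSum g x :=
  tsum_nonneg fun _ => hg _

theorem redWeightBy_one (m : ℕ) (x y : V) :
    redWeightBy w 1 m x y = redWeight w (m + 1) x y := by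
  simp only [redWeightBy, redWeight, Pi.one_apply, one_mul]

variable [∀ x, Finite (G.neighborSet x)]

theorem redWeight_le_pathWeight (hw : ∀ e, 0 ≤ w e) (m : ℕ) (x y : V) :
    redWeight w m x y ≤ pathWeight w m x :=
  Summable.tsum_le_tsum_of_inj (fun p => ⟨p.1, p.2.2.1⟩)
    (fun _ _ h => Subtype.ext (Subtype.ext_iff.mp h :)) (fun p _ => p.1.wgt_nonneg hw)
    (fun _ => le_rfl) .of_finite .of_finite

theorem redWeightBy_le {g : G.Dart → ℝ} {c : ℝ} (hw : ∀ e, 0 ≤ w e) (hg : ∀ d, g d ≤ c) (m : ℕ)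
    (x y : V) : redWeightBy w g m x y ≤ c * redWeight w (m + 1) x y := by
  rw [redWeight, ← tsum_mul_left]
  exact Summable.tsum_le_tsum (fun p => mul_le_mul_of_nonneg_right (hg _) (p.1.wgt_nonneg hw))
    .of_finite .of_finite

theorem tsum_neighborSet_mul_redWeight_le {g : G.Dart → ℝ} {c : ℝ} (hw : ∀ e, 0 ≤ w e)
    (hg0 : ∀ d, 0 ≤ g d) (hg : ∀ d, g d ≤ c) (m : ℕ) (x y : V) :
    ∑' x' : G.neighborSet x, g (G.dartOfNeighborSet x x') * w (G.dartOfNeighborSet x x') *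
        redWeight w m x' y ≤ c * pathWeight w (m + 1) x := by
  rw [pathWeight_succ, ← tsum_mul_left]
  refine Summable.tsum_le_tsum (fun x' => ?_) .of_finite .of_finite
  rw [← mul_assoc]
  exact mul_le_mul (mul_le_mul_of_nonneg_right (hg _) (hw _))
    (redWeight_le_pathWeight hw m x' y) (redWeight_nonneg hw m x' y)
    (mul_nonneg ((hg0 (G.dartOfNeighborSet x x')).trans (hg _)) (hw _))

theorem DiagAbsSummable.of_le_pathWeight (hw : ∀ e, 0 ≤ w e) (hsum : Summable w) {M : ℝ}
    (hdeg : ∀ x, ((G.neighborSet x).ncard : ℝ) ≤ M)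
    {S : lp (fun _ : V => ℂ) 2 →L[ℂ] lp (fun _ : V => ℂ) 2} {c : ℝ} {m : ℕ}
    (h : ∀ x, ‖S (bv x) x‖ ≤ c * pathWeight w (m + 1) x) : DiagAbsSummable S :=
  Summable.of_nonneg_of_le (fun _ => norm_nonneg _) h
    ((summable_pathWeight_succ hw hdeg hsum m).mul_left c)

end Estimates

section TraceFormula

variable {G : SimpleGraph V} {w : G.Dart → ℝ}
  {A B : ℕ → lp (fun _ : V => ℂ) 2 →L[ℂ] lp (fun _ : V => ℂ) 2}
  {C : ℕ → ℕ → lp (fun _ : V => ℂ) 2 →L[ℂ] lp (fun _ : V => ℂ) 2}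
  (hA : ∀ (m : ℕ) (x y : V), A m (bv x) y
    = ∑' p : {p : GPath G m // p.Reduced ∧ p.f 0 = x ∧ p.f m = y}, (GPath.wgt w p.1 : ℂ))
  (hB0 : B 0 = 1)
  (hBev : ∀ (n : ℕ), 1 ≤ n → ∀ x y : V, B (2 * n) (bv x) y
    = if y = x then ((∑' x' : G.neighborSet x, dartW G w x'.2 ^ n : ℝ) : ℂ) else 0)
  (hBodd : ∀ (n : ℕ) (x y : V), B (2 * n + 1) (bv x) y
    = if h : G.Adj x y then ((dartW G w h ^ n * w ⟨(x, y), h⟩ : ℝ) : ℂ) else 0)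
  (hC : ∀ (m n : ℕ) (hm : 1 ≤ m), 1 ≤ n → ∀ x y : V, C m n (bv x) y
    = ∑' p : {p : GPath G m // p.Reduced ∧ p.f 0 = x ∧ p.f m = y},
        ((dartW G w (p.1.adj 0 hm) ^ n * GPath.wgt w p.1 : ℝ) : ℂ))

include hA in
theorem A_apply_bv (m : ℕ) (x y : V) : A m (bv x) y = redWeight w m x y := by
  rw [hA, redWeight, Complex.ofReal_tsum]

include hC in
theorem C_apply_bv_self (s n : ℕ) (hn : 1 ≤ n) (x : V) :
    C (s + 1) n (bv x) x = redWeightBy w (edgeW w ^ n) s x x := by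
  rw [hC (s + 1) n s.succ_pos hn, redWeightBy, Complex.ofReal_tsum]
  rfl

include hA hB0 in
theorem diag_A_mul_B_zero (s : ℕ) (x : V) : (A s * B 0) (bv x) x = redWeight w s x x := by
  rw [hB0, mul_one, A_apply_bv hA]

include hA hBev in
theorem diag_A_mul_B_even (s : ℕ) {k : ℕ} (hk : 1 ≤ k) (x : V) :
    (A s * B (2 * k)) (bv x) x = (outSum (edgeW w ^ k) x * redWeight w s x x : ℝ) := by
  rw [mul_apply_eq_comp,
    apply_eq_mul_of_eq_single _ fun i hi => by rw [hBev k hk, if_neg hi], hBev k hk, if_pos rfl,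
    A_apply_bv hA, Complex.ofReal_mul]
  rfl

include hA hBodd in
theorem diag_A_mul_B_odd (s k : ℕ) (x : V) :
    (A s * B (2 * k + 1)) (bv x) x = (∑' x' : G.neighborSet x, (edgeW w ^ k)
      (G.dartOfNeighborSet x x') * w (G.dartOfNeighborSet x x') * redWeight w s x' x : ℝ) := by
  rw [mul_apply_eq_comp, apply_eq_tsum_subtype_mul _ (S := G.neighborSet x)
    fun i hi => by rw [hBodd, dif_neg (show ¬G.Adj x i from hi)], Complex.ofReal_tsum]
  refine tsum_congr fun x' => ?_
  rw [hBodd, dif_pos (show G.Adj x x' from x'.2), A_apply_bv hA, ← Complex.ofReal_mul]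
  rfl

variable [∀ x, Finite (G.neighborSet x)]

include hA hB0 hBev hBodd in
theorem diagAbsSummable_A_mul_B (hw : ∀ e, 0 ≤ w e) (hsum : Summable w) {M : ℝ}
    (hdeg : ∀ x, ((G.neighborSet x).ncard : ℝ) ≤ M) (s r : ℕ) :
    DiagAbsSummable (A (s + 1) * B r) := by
  obtain ⟨k, rfl | rfl⟩ := Nat.even_or_odd' r
  · rcases Nat.eq_zero_or_pos k with rfl | hk
    · refine .of_le_pathWeight hw hsum hdeg (c := 1) (m := s) fun x => ?_
      rw [mul_zero, diag_A_mul_B_zero hA hB0, Complex.norm_of_nonneg (redWeight_nonneg hw _ _ _),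
        one_mul]
      exact redWeight_le_pathWeight hw _ x x
    · refine .of_le_pathWeight hw hsum hdeg (c := M * ((∑' e, w e) ^ 2) ^ k) (m := s)
        fun x => ?_
      have hout : outSum (edgeW w ^ k) x ≤ M * ((∑' e, w e) ^ 2) ^ k :=
        tsum_neighborSet_le (hdeg x) (fun _ => edgeW_pow_le hw hsum k _)
          (pow_nonneg (sq_nonneg _) _)
      rw [diag_A_mul_B_even hA hBev _ hk, Complex.norm_of_nonneg
        (mul_nonneg (outSum_nonneg (edgeW_pow_nonneg hw k) x) (redWeight_nonneg hw _ _ _))]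
      exact mul_le_mul hout (redWeight_le_pathWeight hw _ x x) (redWeight_nonneg hw _ _ _)
        ((outSum_nonneg (edgeW_pow_nonneg hw k) x).trans hout)
  · refine .of_le_pathWeight hw hsum hdeg (c := ((∑' e, w e) ^ 2) ^ k) (m := s + 1)
      fun x => ?_
    rw [diag_A_mul_B_odd hA hBodd, Complex.norm_of_nonneg (tsum_nonneg fun _ =>
      mul_nonneg (mul_nonneg (edgeW_pow_nonneg hw k _) (hw _)) (redWeight_nonneg hw _ _ _))]
    exact tsum_neighborSet_mul_redWeight_le hw (edgeW_pow_nonneg hw k) (edgeW_pow_le hw hsum k)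
      _ x x

include hC in
theorem diagAbsSummable_C (hw : ∀ e, 0 ≤ w e) (hsum : Summable w) {M : ℝ}
    (hdeg : ∀ x, ((G.neighborSet x).ncard : ℝ) ≤ M) (s n : ℕ) (hn : 1 ≤ n) :
    DiagAbsSummable (C (s + 1) n) := by
  refine .of_le_pathWeight hw hsum hdeg (c := ((∑' e, w e) ^ 2) ^ n) (m := s) fun x => ?_
  rw [C_apply_bv_self hC s n hn, Complex.norm_of_nonneg
    (redWeightBy_nonneg hw (edgeW_pow_nonneg hw n) _ _ _)]
  exact (redWeightBy_le hw (edgeW_pow_le hw hsum n) s x x).trans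
    (mul_le_mul_of_nonneg_left (redWeight_le_pathWeight hw _ x x) (pow_nonneg (sq_nonneg _) n))

include hA hB0 hBev hBodd hC in
theorem sum_neg_one_pow_mul_diag (s n : ℕ) (hn : 1 ≤ n) (x : V) :
    ∑ j ∈ Finset.range (2 * n + 1), (-1 : ℂ) ^ j * (A (s + 1 + j) * B (2 * n - j)) (bv x) x
      = C (s + 1) n (bv x) x := by
  set F : ℕ → ℂ := fun l => (redWeightBy w (edgeW w ^ (n - l)) (s + 2 * l) x x : ℝ)
  rw [Finset.sum_range_succ, Finset.sum_range_two_mul_eq_sub _ F n fun l hl => ?_,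
    C_apply_bv_self hC s n hn]
  · have hlast : (A (s + 1 + 2 * n) * B (2 * n - 2 * n)) (bv x) x = F n := by
      rw [Nat.sub_self, diag_A_mul_B_zero hA hB0]
      simp only [F, Nat.sub_self, pow_zero, redWeightBy_one, add_right_comm]
    rw [hlast, pow_mul, neg_one_sq, one_pow, one_mul, sub_add_cancel]
    simp only [F, Nat.sub_zero, mul_zero, add_zero]
  · beta_reduce
    obtain ⟨k, rfl⟩ : ∃ k, n = l + k + 1 := ⟨n - l - 1, by omega⟩
    have key := congrArg Complex.ofReal (outSum_mul_redWeight_sub_tsum w x x (s + 2 * l) k)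
    rw [show 2 * (l + k + 1) - 2 * l = 2 * (k + 1) by omega,
      show 2 * (l + k + 1) - (2 * l + 1) = 2 * k + 1 by omega,
      diag_A_mul_B_even hA hBev _ (by omega), diag_A_mul_B_odd hA hBodd, pow_succ (-1 : ℂ),
      pow_mul, neg_one_sq, one_pow, show s + 1 + 2 * l = s + 2 * l + 1 by ring,
      show s + 1 + (2 * l + 1) = s + 2 * l + 2 by ring]
    simp only [F, show l + k + 1 - l = k + 1 by omega, show l + k + 1 - (l + 1) = k by omega,
      show s + 2 * (l + 1) = s + 2 * l + 2 by ring]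
    push_cast at key ⊢
    linear_combination key

end TraceFormula

theorem statement_9_general (G : SimpleGraph V)
    (M : ℝ)
    (hval : ∀ x : V, (G.neighborSet x).Finite ∧ ((G.neighborSet x).ncard : ℝ) ≤ M)
    (w : G.Dart → ℝ) (hw : ∀ e, 0 < w e) (hsum : Summable w)
    (A : ℕ → (lp (fun _ : V => ℂ) 2 →L[ℂ] lp (fun _ : V => ℂ) 2))
    (hA : ∀ (m : ℕ) (x y : V), A m (bv x) y
      = ∑' p : {p : GPath G m // p.Reduced ∧ p.f 0 = x ∧ p.f m = y}, (GPath.wgt w p.1 : ℂ))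
    (B : ℕ → (lp (fun _ : V => ℂ) 2 →L[ℂ] lp (fun _ : V => ℂ) 2))
    (hB0 : B 0 = 1)
    (hBev : ∀ (n : ℕ), 1 ≤ n → ∀ x y : V, B (2 * n) (bv x) y
      = if y = x then ((∑' x' : G.neighborSet x, dartW G w x'.2 ^ n : ℝ) : ℂ) else 0)
    (hBodd : ∀ (n : ℕ) (x y : V), B (2 * n + 1) (bv x) y
      = if h : G.Adj x y then ((dartW G w h ^ n * w ⟨(x, y), h⟩ : ℝ) : ℂ) else 0)
    (C : ℕ → ℕ → (lp (fun _ : V => ℂ) 2 →L[ℂ] lp (fun _ : V => ℂ) 2))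
    (hC : ∀ (m n : ℕ) (hm : 1 ≤ m) (hn : 1 ≤ n) (x y : V), C m n (bv x) y
      = ∑' p : {p : GPath G m // p.Reduced ∧ p.f 0 = x ∧ p.f m = y},
          ((dartW G w (p.1.adj 0 hm) ^ n * GPath.wgt w p.1 : ℝ) : ℂ))
    (m n : ℕ) (hm : 1 ≤ m) (hn : 1 ≤ n) :
    DiagAbsSummable (C m n) ∧
    (∀ j ≤ 2 * n, DiagAbsSummable (A (m + j) * B (2 * n - j))) ∧
    diagTr (C m n)
      = ∑ j ∈ Finset.range (2 * n + 1), (-1 : ℂ) ^ j * diagTr (A (m + j) * B (2 * n - j)) := by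
  obtain ⟨s, rfl⟩ : ∃ s, m = s + 1 := ⟨m - 1, by omega⟩
  have : ∀ x, Finite (G.neighborSet x) := fun x => (hval x).1.to_subtype
  have hw0 : ∀ e, 0 ≤ w e := fun e => (hw e).le
  have hdeg : ∀ x, ((G.neighborSet x).ncard : ℝ) ≤ M := fun x => (hval x).2
  have hAB : ∀ j ≤ 2 * n, DiagAbsSummable (A (s + 1 + j) * B (2 * n - j)) := fun j _ => by
    rw [add_right_comm]
    exact diagAbsSummable_A_mul_B hA hB0 hBev hBodd hw0 hsum hdeg (s + j) _
  refine ⟨diagAbsSummable_C hC hw0 hsum hdeg s n hn, hAB, ?_⟩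
  rw [sum_mul_diagTr _ _ _ fun j hj => hAB j (Nat.lt_succ_iff.mp (Finset.mem_range.mp hj))]
  exact tsum_congr fun x => (sum_neg_one_pow_mul_diag hA hB0 hBev hBodd hC s n hn x).symm

/-- For all `m, n ≥ 1`:
`tr C_{m,n} = Σ_{j=0}^{2n} (−1)ʲ tr(A_{m+j} B_{2n−j})`, all operators involved having
absolutely summable diagonals. -/
theorem statement_9 (G : SimpleGraph V) (hconn : G.Connected)
    (M : ℝ) (hM : 0 < M)
    (hval : ∀ x : V, (G.neighborSet x).Finite ∧ ((G.neighborSet x).ncard : ℝ) ≤ M)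
    (w : G.Dart → ℝ) (hw : ∀ e, 0 < w e) (hsum : Summable w)
    (A : ℕ → (lp (fun _ : V => ℂ) 2 →L[ℂ] lp (fun _ : V => ℂ) 2))
    (hA0 : A 0 = 1)
    (hA : ∀ (m : ℕ) (x y : V), A m (bv x) y
      = ∑' p : {p : GPath G m // p.Reduced ∧ p.f 0 = x ∧ p.f m = y}, (GPath.wgt w p.1 : ℂ))
    (B : ℕ → (lp (fun _ : V => ℂ) 2 →L[ℂ] lp (fun _ : V => ℂ) 2))
    (hB0 : B 0 = 1)
    (hBev : ∀ (n : ℕ), 1 ≤ n → ∀ x y : V, B (2 * n) (bv x) y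
      = if y = x then ((∑' x' : G.neighborSet x, dartW G w x'.2 ^ n : ℝ) : ℂ) else 0)
    (hBodd : ∀ (n : ℕ) (x y : V), B (2 * n + 1) (bv x) y
      = if h : G.Adj x y then ((dartW G w h ^ n * w ⟨(x, y), h⟩ : ℝ) : ℂ) else 0)
    (C : ℕ → ℕ → (lp (fun _ : V => ℂ) 2 →L[ℂ] lp (fun _ : V => ℂ) 2))
    (hC : ∀ (m n : ℕ) (hm : 1 ≤ m) (hn : 1 ≤ n) (x y : V), C m n (bv x) y
      = ∑' p : {p : GPath G m // p.Reduced ∧ p.f 0 = x ∧ p.f m = y},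
          ((dartW G w (p.1.adj 0 hm) ^ n * GPath.wgt w p.1 : ℝ) : ℂ))
    (m n : ℕ) (hm : 1 ≤ m) (hn : 1 ≤ n) :
    DiagAbsSummable (C m n) ∧
    (∀ j ≤ 2 * n, DiagAbsSummable (A (m + j) * B (2 * n - j))) ∧
    diagTr (C m n)
      = ∑ j ∈ Finset.range (2 * n + 1), (-1 : ℂ) ^ j * diagTr (A (m + j) * B (2 * n - j)) :=
  statement_9_general G M hval w hw hsum A hA B hB0 hBev hBodd C hC m n hm hn
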